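/- Let C = while e do (C₁;…;Cₙ) be a loop of the WHILE language, E its dependency relation, and S₁,…,S_k a saturated covering of C, with split loops C^1,…,C^k. If the execution of C from a state σ terminates in a state σ', then for every j ∈ {1,…,k} the execution of the split loop C^j from σ terminates in some state σ_j, and for every variable x that is modified by C^j (i.e., x ∈ Out(C_i) for some i ∈ S_j) one has σ_j(x) = σ'(x). That is, each split loop computes, for each of its modified variables, the same final value as the original loop. -/

import Mathlib

/-- Variables: a countably infinite set. -/
abbrev Var := ℕ

/-- Values: integers or integer arrays (total functions ℤ → ℤ). -/
inductive Val : Type where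
  | int : ℤ → Val
  | arr : (ℤ → ℤ) → Val

/-- Coerce a value to an integer. -/
def Val.toInt : Val → ℤ
  | .int z => z
  | .arr _ => 0

/-- Coerce a value to an array. -/
def Val.toArr : Val → (ℤ → ℤ)
  | .int _ => fun _ => 0
  | .arr a => a

/-- States: total maps from variables to values. -/
abbrev State := Var → Val

/-- Expressions: variables, integer literals, array reads, and
applications of fixed interpreted `n`-ary operators. -/
inductive Expr : Type where
  | var : Var → Expr
  | lit : ℤ → Expr
  | read : Var → Expr → Expr
  | op : (n : ℕ) → ((Fin n → ℤ) → ℤ) → (Fin n → Expr) → Expr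

/-- Evaluation of expressions. -/
def Expr.eval (σ : State) : Expr → Val
  | .var x => σ x
  | .lit z => .int z
  | .read t e => .int ((σ t).toArr ((Expr.eval σ e).toInt))
  | .op n f args => .int (f fun i => (Expr.eval σ (args i)).toInt)

/-- An expression is truthy in a state if it evaluates to a nonzero integer. -/
def Expr.truthy (e : Expr) (σ : State) : Prop := (e.eval σ).toInt ≠ 0

/-- Variables occurring in an expression. -/
def Expr.occ : Expr → Set Var
  | .var x => {x}
  | .lit _ => ∅
  | .read t e => {t} ∪ Expr.occ e
  | .op n _ args => ⋃ i : Fin n, Expr.occ (args i)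

/-- Commands of the WHILE language. -/
inductive Com : Type where
  | assign : Var → Expr → Com
  | store : Var → Expr → Expr → Com          -- t[e₁] := e₂
  | ite : Expr → Com → Com → Com
  | whileDo : Expr → Com → Com
  | use : List Var → Com
  | skip : Com
  | seq : Com → Com → Com

/-- `Out C`: the set of variables modified by `C`. -/
def Com.out : Com → Set Var
  | .assign x _ => {x}
  | .store t _ _ => {t}
  | .ite _ c₁ c₂ => c₁.out ∪ c₂.out
  | .whileDo _ c => c.out
  | .use _ => ∅
  | .skip => ∅
  | .seq c₁ c₂ => c₁.out ∪ c₂.out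

/-- `In C`: the set of variables used by `C`. -/
def Com.inp : Com → Set Var
  | .assign _ e => e.occ
  | .store _ e₁ e₂ => e₁.occ ∪ e₂.occ
  | .ite e c₁ c₂ => e.occ ∪ c₁.inp ∪ c₂.inp
  | .whileDo e c => e.occ ∪ c.inp
  | .use xs => {x | x ∈ xs}
  | .skip => ∅
  | .seq c₁ c₂ => c₁.inp ∪ c₂.inp

/-- `Occ C`: the set of variables occurring in `C`. -/
def Com.occ : Com → Set Var
  | .assign x e => {x} ∪ e.occ
  | .store t e₁ e₂ => {t} ∪ e₁.occ ∪ e₂.occ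
  | .ite e c₁ c₂ => e.occ ∪ c₁.occ ∪ c₂.occ
  | .whileDo e c => e.occ ∪ c.occ
  | .use xs => {x | x ∈ xs}
  | .skip => ∅
  | .seq c₁ c₂ => c₁.occ ∪ c₂.occ

/-- Standard deterministic big-step operational semantics. -/
inductive BigStep : Com → State → State → Prop where
  | assign {x e σ} :
      BigStep (.assign x e) σ (Function.update σ x (e.eval σ))
  | store {t e₁ e₂ σ} :
      BigStep (.store t e₁ e₂) σ
        (Function.update σ t
          (Val.arr (Function.update (σ t).toArr ((e₁.eval σ).toInt) ((e₂.eval σ).toInt))))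
  | iteTrue {e c₁ c₂ σ σ'} : e.truthy σ → BigStep c₁ σ σ' →
      BigStep (.ite e c₁ c₂) σ σ'
  | iteFalse {e c₁ c₂ σ σ'} : ¬ e.truthy σ → BigStep c₂ σ σ' →
      BigStep (.ite e c₁ c₂) σ σ'
  | whileTrue {e c σ σ₁ σ₂} : e.truthy σ → BigStep c σ σ₁ →
      BigStep (.whileDo e c) σ₁ σ₂ → BigStep (.whileDo e c) σ σ₂
  | whileFalse {e c σ} : ¬ e.truthy σ → BigStep (.whileDo e c) σ σ
  | use {xs σ} : BigStep (.use xs) σ σ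
  | skip {σ} : BigStep .skip σ σ
  | seq {c₁ c₂ σ σ₁ σ₂} : BigStep c₁ σ σ₁ → BigStep c₂ σ₁ σ₂ →
      BigStep (.seq c₁ c₂) σ σ₂

/-- Sequential composition of a list of commands. -/
def seqList (l : List Com) : Com := l.foldr Com.seq Com.skip

/-- The body `C_{i₁};…;C_{i_m}` selected by a set `S` of indices,
with `i₁ < … < i_m` enumerating `S`. -/
def selBody {n : ℕ} (body : Fin n → Com) (S : Finset (Fin n)) : Com :=
  seqList ((S.sort (· ≤ ·)).map body)

/-- The split loop `while e do (C_{i₁};…;C_{i_m})` for a set `S` of indices. -/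
def splitLoop {n : ℕ} (e : Expr) (body : Fin n → Com) (S : Finset (Fin n)) : Com :=
  Com.whileDo e (selBody body S)

/-- The dependency relation of the loop `while e do (C₁;…;Cₙ)`:
`Dep e body i j` iff either `i ≠ j` and `Out(C_j) ∩ (In(C_i) ∪ Out(C_i)) ≠ ∅`
(flow and output dependence), or `Out(C_j) ∩ Occ(e) ≠ ∅` (loop-guard correction). -/
def Dep {n : ℕ} (e : Expr) (body : Fin n → Com) (i j : Fin n) : Prop :=
  (i ≠ j ∧ ((body j).out ∩ ((body i).inp ∪ (body i).out)).Nonempty) ∨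
  ((body j).out ∩ e.occ).Nonempty

/-- A saturated covering of the loop `while e do (C₁;…;Cₙ)`:
a finite family of nonempty subsets of `{1,…,n}` covering it,
each closed under the dependency relation. -/
def SaturatedCovering {n k : ℕ} (e : Expr) (body : Fin n → Com)
    (S : Fin k → Finset (Fin n)) : Prop :=
  (∀ j, (S j).Nonempty) ∧ (∀ i, ∃ j, i ∈ S j) ∧
  (∀ j i m, i ∈ S j → Dep e body i m → m ∈ S j)

/-- `p`-fold sequential iteration of a command. -/
def iterate (c : Com) (p : ℕ) : Com := seqList (List.replicate p c)

/-! Let `A` be the set of variables that no command outside `S` modifies. Closure of `S` under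
the dependency relation forces the guard and every command of `S` to read and write only variables
of `A`, while the commands outside `S` leave `A` untouched. So from states agreeing on `A`, one pass
of the full body and one pass of the body restricted to `S` end in states agreeing on `A`, and by
induction on the derivation the same holds for the two loops. Finally, every variable modified by
`C^j` lies in `A`. -/

open Set

theorem Finset.sort_filter {α : Type*} [LinearOrder α] (s : Finset α) (p : α → Prop)
    [DecidablePred p] : (s.filter p).sort = s.sort.filter (fun a => decide (p a)) :=
  (Finset.sortedLT_sort _).eq_of_mem_iff ((Finset.sortedLT_sort s).pairwise.filter _).sortedLT
    fun a => by simp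

theorem Expr.eval_congr {σ τ : State} : ∀ {e : Expr}, EqOn σ τ e.occ → e.eval σ = e.eval τ
  | .var _, h => h (mem_singleton _)
  | .lit _, _ => rfl
  | .read t e, h => by
      rw [Expr.occ, eqOn_union] at h
      simp only [Expr.eval, h.1 (mem_singleton t), Expr.eval_congr h.2]
  | .op _ _ args, h => by
      have hargs i : (args i).eval σ = (args i).eval τ :=
        Expr.eval_congr (h.mono (subset_iUnion (fun i => (args i).occ) i))
      simp only [Expr.eval, hargs]

theorem Expr.truthy_congr {σ τ : State} {e : Expr} (h : EqOn σ τ e.occ) :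
    e.truthy σ ↔ e.truthy τ := by
  rw [Expr.truthy, Expr.truthy, Expr.eval_congr h]

theorem BigStep.eqOn_compl_out {c : Com} {σ σ' : State} (h : BigStep c σ σ') :
    EqOn σ' σ c.outᶜ := by
  induction h with
  | assign | store => exact fun x hx => Function.update_of_ne hx _ _
  | iteTrue _ _ ih => exact ih.mono (compl_subset_compl.2 subset_union_left)
  | iteFalse _ _ ih => exact ih.mono (compl_subset_compl.2 subset_union_right)
  | whileTrue _ _ _ ih₁ ih₂ => exact ih₂.trans ih₁
  | whileFalse | use | skip => exact eqOn_refl _ _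
  | seq _ _ ih₁ ih₂ =>
      exact (ih₂.mono (compl_subset_compl.2 subset_union_right)).trans
        (ih₁.mono (compl_subset_compl.2 subset_union_left))

theorem Set.EqOn.update {α β : Type*} [DecidableEq α] {f g : α → β} {s : Set α}
    (h : EqOn f g s) (a : α) (b : β) : EqOn (Function.update f a b) (Function.update g a b) s := by
  intro x hx
  rcases eq_or_ne x a with rfl | hne
  · simp
  · simp [Function.update_of_ne hne, h hx]

def Simulates (A : Set Var) (c d : Com) : Prop :=
  ∀ ⦃σ σ' τ : State⦄, BigStep c σ σ' → EqOn σ τ A → ∃ τ', BigStep d τ τ' ∧ EqOn σ' τ' A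

namespace Simulates

variable {A : Set Var} {e : Expr} {c c₁ c₂ d d₁ d₂ : Com}

theorem seq (h₁ : Simulates A c₁ d₁) (h₂ : Simulates A c₂ d₂) :
    Simulates A (c₁.seq c₂) (d₁.seq d₂) := by
  rintro σ σ' τ (_ | _ | _ | _ | _ | _ | _ | _ | ⟨hrun₁, hrun₂⟩) hστ
  obtain ⟨τ₁, hd₁, h₁⟩ := h₁ hrun₁ hστ
  obtain ⟨τ₂, hd₂, h₂⟩ := h₂ hrun₂ h₁
  exact ⟨τ₂, .seq hd₁ hd₂, h₂⟩

theorem seq_of_disjoint_left (hc : Disjoint c.out A) (h : Simulates A c₂ d) :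
    Simulates A (c.seq c₂) d := by
  rintro σ σ' τ (_ | _ | _ | _ | _ | _ | _ | _ | ⟨hrun₁, hrun₂⟩) hστ
  exact h hrun₂ ((hrun₁.eqOn_compl_out.mono hc.subset_compl_left).trans hστ)

theorem ite (he : e.occ ⊆ A) (h₁ : Simulates A c₁ d₁) (h₂ : Simulates A c₂ d₂) :
    Simulates A (.ite e c₁ c₂) (.ite e d₁ d₂) := by
  rintro σ σ' τ (_ | _ | ⟨htrue, hrun⟩ | ⟨hfalse, hrun⟩ | _ | _ | _ | _ | _) hστ
  · obtain ⟨τ', hd, h'⟩ := h₁ hrun hστ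
    exact ⟨τ', .iteTrue ((Expr.truthy_congr (hστ.mono he)).1 htrue) hd, h'⟩
  · obtain ⟨τ', hd, h'⟩ := h₂ hrun hστ
    exact ⟨τ', .iteFalse (mt (Expr.truthy_congr (hστ.mono he)).2 hfalse) hd, h'⟩

theorem whileDo (he : e.occ ⊆ A) (h : Simulates A c d) :
    Simulates A (.whileDo e c) (.whileDo e d) := by
  intro σ σ' τ hrun
  generalize hw : Com.whileDo e c = w at hrun
  induction hrun generalizing τ with
  | whileTrue htrue hbody _ _ ih =>
      cases hw
      intro hστ
      obtain ⟨τ₁, hd, h₁⟩ := h hbody hστ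
      obtain ⟨τ₂, hloop, h₂⟩ := ih rfl h₁
      exact ⟨τ₂, .whileTrue ((Expr.truthy_congr (hστ.mono he)).1 htrue) hd hloop, h₂⟩
  | whileFalse hfalse =>
      cases hw
      intro hστ
      exact ⟨τ, .whileFalse (mt (Expr.truthy_congr (hστ.mono he)).2 hfalse), hστ⟩
  | _ => cases hw

theorem refl_of_subset : ∀ {c : Com}, c.inp ∪ c.out ⊆ A → Simulates A c c
  | .assign x e, hA => by
      simp only [Com.inp, Com.out, union_subset_iff, singleton_subset_iff] at hA
      rintro σ σ' τ (_ | _ | _ | _ | _ | _ | _ | _ | _) hστ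
      rw [Expr.eval_congr (hστ.mono hA.1)]
      exact ⟨_, .assign, hστ.update x _⟩
  | .store t e₁ e₂, hA => by
      simp only [Com.inp, Com.out, union_subset_iff, singleton_subset_iff] at hA
      rintro σ σ' τ (_ | _ | _ | _ | _ | _ | _ | _ | _) hστ
      rw [Expr.eval_congr (hστ.mono hA.1.1), Expr.eval_congr (hστ.mono hA.1.2), hστ hA.2]
      exact ⟨_, .store, hστ.update t _⟩
  | .ite e c₁ c₂, hA => by
      simp only [Com.inp, Com.out, union_subset_iff] at hA
      exact ite hA.1.1.1 (refl_of_subset (union_subset hA.1.1.2 hA.2.1))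
        (refl_of_subset (union_subset hA.1.2 hA.2.2))
  | .whileDo e c, hA => by
      simp only [Com.inp, Com.out, union_subset_iff] at hA
      exact whileDo hA.1.1 (refl_of_subset (union_subset hA.1.2 hA.2))
  | .use _, _ => by
      rintro σ σ' τ (_ | _ | _ | _ | _ | _ | _ | _ | _) hστ
      exact ⟨τ, .use, hστ⟩
  | .skip, _ => by
      rintro σ σ' τ (_ | _ | _ | _ | _ | _ | _ | _ | _) hστ
      exact ⟨τ, .skip, hστ⟩
  | .seq c₁ c₂, hA => by
      simp only [Com.inp, Com.out, union_subset_iff] at hA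
      exact seq (refl_of_subset (union_subset hA.1.1 hA.2.1))
        (refl_of_subset (union_subset hA.1.2 hA.2.2))

theorem seqList_filter {ι : Type*} (body : ι → Com) (p : ι → Bool)
    (hkeep : ∀ i, p i → (body i).inp ∪ (body i).out ⊆ A)
    (hdrop : ∀ i, p i = false → Disjoint (body i).out A) :
    ∀ L : List ι, Simulates A (seqList (L.map body)) (seqList ((L.filter p).map body))
  | [] => refl_of_subset (by simp [seqList, Com.inp, Com.out])
  | i :: L => by
      cases hi : p i
      · rw [List.filter_cons_of_neg (by simp [hi])]
        exact seq_of_disjoint_left (hdrop i hi) (seqList_filter body p hkeep hdrop L)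
      · rw [List.filter_cons_of_pos hi]
        exact seq (refl_of_subset (hkeep i hi)) (seqList_filter body p hkeep hdrop L)

end Simulates

def DepClosed {n : ℕ} (e : Expr) (body : Fin n → Com) (S : Finset (Fin n)) : Prop :=
  ∀ i m, i ∈ S → Dep e body i m → m ∈ S

namespace DepClosed

variable {n : ℕ} {e : Expr} {body : Fin n → Com} {S : Finset (Fin n)}

theorem inp_union_out_subset (hS : DepClosed e body S) {i : Fin n} (hi : i ∈ S) :
    (body i).inp ∪ (body i).out ⊆ (⋃ m ∉ S, (body m).out)ᶜ := by
  intro x hx hx'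
  simp only [mem_iUnion] at hx'
  obtain ⟨m, hm, hxm⟩ := hx'
  exact hm (hS i m hi (Or.inl ⟨fun h => hm (h ▸ hi), x, hxm, hx⟩))

theorem occ_subset (hS : DepClosed e body S) (hne : S.Nonempty) :
    e.occ ⊆ (⋃ m ∉ S, (body m).out)ᶜ := by
  obtain ⟨i, hi⟩ := hne
  intro x hx hx'
  simp only [mem_iUnion] at hx'
  obtain ⟨m, hm, hxm⟩ := hx'
  exact hm (hS i m hi (Or.inr ⟨x, hxm, hx⟩))

theorem simulates_splitLoop (hS : DepClosed e body S) (hne : S.Nonempty) :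
    Simulates (⋃ m ∉ S, (body m).out)ᶜ (splitLoop e body .univ) (splitLoop e body S) := by
  refine Simulates.whileDo (hS.occ_subset hne) ?_
  have hfilter := Simulates.seqList_filter body (fun i => decide (i ∈ S))
    (fun _ hi => hS.inp_union_out_subset (of_decide_eq_true hi))
    (fun i hi => disjoint_compl_right_iff_subset.2
      (subset_iUnion₂ (s := fun m (_ : m ∉ S) => (body m).out) i (of_decide_eq_false hi)))
    Finset.univ.sort
  rwa [← Finset.sort_filter, Finset.filter_univ_mem] at hfilter

end DepClosed

/-- If the execution of the loop from `σ` terminates in `σ'`, then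
each split loop `C^j` terminates from `σ` in some `σ_j`, and for every variable
`x` modified by `C^j` one has `σ_j x = σ' x`. -/
theorem split_loop_computes_same_values {n k : ℕ} (e : Expr)
    (body : Fin n → Com) (S : Fin k → Finset (Fin n))
    (hS : SaturatedCovering e body S) (σ σ' : State)
    (h : BigStep (splitLoop e body Finset.univ) σ σ') :
    ∀ j : Fin k, ∃ σj : State,
      BigStep (splitLoop e body (S j)) σ σj ∧
      ∀ x : Var, (∃ i ∈ S j, x ∈ (body i).out) → σj x = σ' x := by
  intro j
  obtain ⟨hne, -, hclosed⟩ := hS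
  obtain ⟨σj, hrun, hagree⟩ :=
    DepClosed.simulates_splitLoop (hclosed j) (hne j) h (eqOn_refl σ _)
  refine ⟨σj, hrun, fun x ⟨i, hi, hx⟩ => (hagree ?_).symm⟩
  exact DepClosed.inp_union_out_subset (hclosed j) hi (Or.inr hx)
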